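/- arXiv:1203.5244 — 4 statements merged into one kernel-verified Lean document; each statement's English description precedes it below -/
import Mathlib

section
/- Let $q\geq3$, $m\geq3$, and let $S\subseteq\mathbb{F}_q^m$ with $\#S=u\cdot q^n<q^m$ where $q\nmid u$. Fix $v<u$ and suppose that for every affine hyperplane $H$ of $\mathbb{F}_q^m$, either $\#(S\cap H)=0$, or $\#(S\cap H)=v\cdot q^{n-1}$, or $\#(S\cap H)\geq u\cdot q^{n-1}$. Then there exists an affine hyperplane $H$ with $S\cap H=\emptyset$ or $\#(S\cap H)=v\cdot q^{n-1}$. -/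
/-- If `#S = u·qⁿ` with `q ∤ u`, and every affine hyperplane meets `S` in `0`, `v·q^(n-1)`
or at least `u·q^(n-1)` points, then some hyperplane meets `S` in `0` or `v·q^(n-1)` points. -/
theorem stmt2 {F : Type} [Field F] [Fintype F] [DecidableEq F] {m n u v : ℕ}
    (hq : 3 ≤ Fintype.card F) (hm : 3 ≤ m) (hn : 1 ≤ n)
    (S : Finset (Fin m → F))
    (hcard : S.card = u * Fintype.card F ^ n)
    (hlt : u * Fintype.card F ^ n < Fintype.card F ^ m)
    (hu : ¬ (Fintype.card F ∣ u)) (hv : v < u)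
    (hH : ∀ (φ : (Fin m → F) →ₗ[F] F) (c : F), φ ≠ 0 →
      (S.filter (fun x => φ x = c)).card = 0 ∨
      (S.filter (fun x => φ x = c)).card = v * Fintype.card F ^ (n - 1) ∨
      u * Fintype.card F ^ (n - 1) ≤ (S.filter (fun x => φ x = c)).card) :
    ∃ (φ : (Fin m → F) →ₗ[F] F) (c : F), φ ≠ 0 ∧
      ((S.filter (fun x => φ x = c)).card = 0 ∨
       (S.filter (fun x => φ x = c)).card = v * Fintype.card F ^ (n - 1)) := by
  by_contra hcon
  push_neg at hcon
  set q := Fintype.card F with hqdef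
  have hq2 : 2 ≤ q := by omega
  have hu1 : 1 ≤ u := by
    rcases Nat.eq_zero_or_pos u with h | h
    · exact absurd (h ▸ Dvd.intro 0 rfl) hu
    · exact h
  -- every nonzero hyperplane section is large
  have key : ∀ (φ : (Fin m → F) →ₗ[F] F) (c : F), φ ≠ 0 →
      u * q ^ (n-1) ≤ (S.filter (fun x => φ x = c)).card := by
    intro φ c hφ
    rcases hH φ c hφ with h | h | h
    · exact absurd h (hcon φ c hφ).1
    · exact absurd h (hcon φ c hφ).2
    · exact h
  -- a point outside S
  obtain ⟨x, hx⟩ : ∃ x, x ∉ S := by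
    by_contra h
    push_neg at h
    have hS : S = Finset.univ := Finset.eq_univ_iff_forall.2 h
    have : Fintype.card (Fin m → F) = q ^ m := by simp [hqdef]
    rw [hS, Finset.card_univ, this] at hcard
    omega
  -- the functional attached to a vector
  let L : (Fin m → F) → ((Fin m → F) →ₗ[F] F) :=
    fun a => (LinearEquiv.piRing F F (Fin m) F).symm a
  have Lapp : ∀ a g : Fin m → F, L a g = ∑ i, g i * a i := by
    intro a g
    simp [L, LinearEquiv.piRing_symm_apply, smul_eq_mul]
  have Lne : ∀ a : Fin m → F, a ≠ 0 → L a ≠ 0 := by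
    intro a ha h
    exact ha (((LinearEquiv.piRing F F (Fin m) F).symm.map_eq_zero_iff).mp h)
  -- cardinality of the kernel hyperplane
  have cardker : ∀ w : Fin m → F, w ≠ 0 →
      (Finset.univ.filter (fun a : Fin m → F => L a w = 0)).card = q ^ (m - 1) := by
    intro w hw
    -- L a w = L w a
    have hsymm : ∀ a, L a w = L w a := by
      intro a; rw [Lapp, Lapp]; exact Finset.sum_congr rfl (fun i _ => mul_comm _ _)
    have hrange : LinearMap.range (L w) = ⊤ := by
      obtain ⟨g, hg⟩ : ∃ g, L w g ≠ 0 := by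
        by_contra hc
        push_neg at hc
        exact Lne w hw (LinearMap.ext fun g => hc g)
      rw [LinearMap.range_eq_top]
      intro c
      refine ⟨(c * (L w g)⁻¹) • g, ?_⟩
      rw [map_smul, smul_eq_mul, mul_assoc, inv_mul_cancel₀ hg, mul_one]
    have hfin : Module.finrank F (LinearMap.ker (L w)) = m - 1 := by
      have h1 := LinearMap.finrank_range_add_finrank_ker (L w)
      rw [hrange, finrank_top] at h1
      have h2 : Module.finrank F (Fin m → F) = m := by simp
      have h3 : Module.finrank F F = 1 := Module.finrank_self F
      omega
    haveI inst : Fintype (LinearMap.ker (L w)) :=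
      Fintype.ofFinset (Finset.univ.filter (fun a => L w a = 0))
        (fun a => by simp [LinearMap.mem_ker])
    have hck : Fintype.card (LinearMap.ker (L w))
        = (Finset.univ.filter (fun a : Fin m → F => L w a = 0)).card :=
      Fintype.card_of_subtype _ (fun a => by simp [LinearMap.mem_ker])
    have hcardker : Fintype.card (LinearMap.ker (L w)) = q ^ (m - 1) := by
      rw [Module.card_eq_pow_finrank (K := F) (V := LinearMap.ker (L w)), hfin]
    have hfilter : Finset.univ.filter (fun a : Fin m → F => L a w = 0)
        = Finset.univ.filter (fun a : Fin m → F => L w a = 0) :=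
      Finset.filter_congr (fun a _ => by rw [hsymm a])
    rw [hfilter, ← hck, hcardker]
  -- the double count
  let D : Finset (Fin m → F) := Finset.univ.filter (fun a => a ≠ 0)
  have hDcard : D.card = q ^ m - 1 := by
    have : D = Finset.univ.erase 0 := by
      ext a; simp [D, Finset.mem_erase, and_comm]
    rw [this, Finset.card_erase_of_mem (Finset.mem_univ _), Finset.card_univ]
    congr 1
    simp [hqdef]
  have count1 : ∀ a ∈ D, u * q ^ (n-1) ≤ (S.filter (fun y => L a y = L a x)).card := by
    intro a ha
    exact key (L a) (L a x) (Lne a (by simpa [D] using ha))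
  have count2 : ∑ a ∈ D, (S.filter (fun y => L a y = L a x)).card
      = S.card * (q ^ (m-1) - 1) := by
    have step : ∀ a ∈ D, (S.filter (fun y => L a y = L a x)).card
        = ∑ y ∈ S, if L a (y - x) = 0 then 1 else 0 := by
      intro a _
      rw [Finset.card_filter]
      refine Finset.sum_congr rfl (fun y _ => ?_)
      congr 1
      rw [map_sub, sub_eq_zero]
    rw [Finset.sum_congr rfl step, Finset.sum_comm]
    have inner : ∀ y ∈ S, (∑ a ∈ D, if L a (y - x) = 0 then 1 else 0)
        = q ^ (m-1) - 1 := by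
      intro y hy
      have hyx : y - x ≠ 0 := sub_ne_zero.2 (fun h => hx (h ▸ hy))
      rw [← Finset.card_filter]
      have hDf : D.filter (fun a => L a (y - x) = 0)
          = (Finset.univ.filter (fun a : Fin m → F => L a (y - x) = 0)).erase 0 := by
        ext a
        simp only [D, Finset.mem_filter, Finset.mem_erase, Finset.mem_univ, true_and]
        try tauto
      have h0 : (0 : Fin m → F) ∈
          Finset.univ.filter (fun a : Fin m → F => L a (y - x) = 0) := by
        simp [L]
      rw [hDf, Finset.card_erase_of_mem h0, cardker _ hyx]
    rw [Finset.sum_congr rfl inner, Finset.sum_const, smul_eq_mul]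
  -- combine
  have lower : D.card * (u * q ^ (n-1)) ≤ ∑ a ∈ D, (S.filter (fun y => L a y = L a x)).card :=
    Finset.card_nsmul_le_sum D _ _ count1
  rw [count2, hDcard, hcard] at lower
  -- arithmetic contradiction
  have hqm : q ^ m = q * q ^ (m-1) := by
    conv_lhs => rw [show m = 1 + (m-1) by omega, pow_add, pow_one]
  have hqn : q ^ n = q * q ^ (n-1) := by
    conv_lhs => rw [show n = 1 + (n-1) by omega, pow_add, pow_one]
  have hqm1 : 1 ≤ q ^ (m-1) := Nat.one_le_pow _ _ (by omega)
  have hqn1 : 1 ≤ q ^ (n-1) := Nat.one_le_pow _ _ (by omega)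
  rw [hqm, hqn] at lower
  have h1 : 1 ≤ q * q ^ (m-1) := Nat.one_le_iff_ne_zero.2 (by positivity)
  zify [h1, hqm1] at lower
  have hb : (1:ℤ) ≤ (u:ℤ) * (q:ℤ) ^ (n-1) := by
    have := mul_le_mul hu1 hqn1 (by norm_num) (by omega)
    exact_mod_cast by simpa using this
  nlinarith [lower, hb, hqm1, hq2, hqn1, hu1]
end

section
/- Let $q\geq5$, $m\geq2$, $1\leq s\leq q-4$, and let $f\in R_q((m-1)(q-1)+s,m)$ with Hamming weight $|f|=q-s+1$. Then the support of $f$ is contained in an affine line of $\mathbb{F}_q^m$. -/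
/-- Membership in the generalized Reed–Muller code `R_q(r,m)`: `f` is represented by a
polynomial of total degree at most `r` (equivalently, its reduced form has degree ≤ r). -/
def RM (F : Type) [Field F] (r m : ℕ) (f : (Fin m → F) → F) : Prop :=
  ∃ P : MvPolynomial (Fin m) F, P.totalDegree ≤ r ∧ ∀ x, MvPolynomial.eval x P = f x

/-- Hamming weight: the size of the support of `f`. -/
def wt {F : Type} [Field F] [Fintype F] [DecidableEq F] {m : ℕ} (f : (Fin m → F) → F) : ℕ :=
  (Finset.univ.filter fun x => f x ≠ 0).card

/-! Let `S` be the support of `f`, so `|S| = q - s + 1 ≥ 5`, and let `P` represent `f`. For every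
polynomial `G` of degree at most `|S| - 3 = q - s - 2`, the product `P G` has degree `< m (q - 1)`,
so it sums to zero over `𝔽_q^m` (as in Chevalley–Warning); hence `G` cannot vanish on all of `S`
but one point `p`. If `S` is not collinear, such a `G` is a product of affine forms vanishing off
`p`, one per point of `S \ {p}`, except that a single form kills a whole line missing `p`: take a
line through three points of `S`, or, when no three points of `S` are collinear, two lines through
two disjoint pairs of points of `S \ {p}`. -/

open MvPolynomial Finset

theorem collinear_of_subset_affineSpan_pair {k V P : Type*} [DivisionRing k] [AddCommGroup V]
    [Module k V] [AddTorsor V P] {s : Set P} {a b : P} (h : s ⊆ line[k, a, b]) :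
    Collinear k s := by
  refine (collinear_iff_exists_forall_eq_smul_vadd s).2 ⟨a, b -ᵥ a, fun p hp => ?_⟩
  obtain ⟨r, rfl⟩ := mem_affineSpan_pair_iff_exists_lineMap_eq.1 (h hp)
  exact ⟨r, AffineMap.lineMap_apply a b r⟩

section

variable {K σ : Type*} [Field K] [Fintype σ] [DecidableEq σ]

namespace MvPolynomial

theorem eval_eq_zero_of_forall_ne [Fintype K] (H : MvPolynomial σ K)
    (hH : H.totalDegree < (Fintype.card K - 1) * Fintype.card σ) (p : σ → K)
    (h : ∀ x, x ≠ p → eval x H = 0) : eval p H = 0 := by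
  rw [← sum_eval_eq_zero H hH, Finset.sum_eq_single p (fun x _ hx => h x hx) (by simp)]

theorem exists_totalDegree_le_one_vanishing_on {E : AffineSubspace K (σ → K)} {p : σ → K}
    (hp : p ∉ E) :
    ∃ G : MvPolynomial σ K, G.totalDegree ≤ 1 ∧ (∀ x ∈ E, eval x G = 0) ∧ eval p G ≠ 0 := by
  rcases (E : Set (σ → K)).eq_empty_or_nonempty with hE | ⟨a, ha⟩
  · exact ⟨1, by simp, fun x hx => by simp [← SetLike.mem_coe, hE] at hx, by simp⟩
  have hpa : p - a ∉ E.direction := fun h =>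
    hp (by simpa using AffineSubspace.vadd_mem_of_mem_direction h ha)
  obtain ⟨φ, hφp, hφE⟩ := Submodule.exists_dual_map_eq_bot_of_notMem hpa inferInstance
  have hφ : ∀ x, eval x (∑ i, C (φ fun j => if i = j then 1 else 0) * X i) = φ x := fun x => by
    simp [LinearMap.pi_apply_eq_sum_univ φ x, mul_comm]
  refine ⟨∑ i, C (φ fun j => if i = j then 1 else 0) * X i - C (φ a), ?_, fun x hx => ?_, ?_⟩
  · refine (totalDegree_sub _ _).trans (max_le ?_ (by simp))
    refine (totalDegree_finsetSum _ _).trans (Finset.sup_le fun i _ => ?_)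
    exact (totalDegree_mul _ _).trans (by simp)
  · have : φ (x - a) = 0 :=
      LinearMap.le_ker_iff_map.2 hφE (AffineSubspace.vsub_mem_direction hx ha)
    simpa [hφ, sub_eq_zero] using this
  · simpa [hφ, sub_eq_zero] using hφp

theorem exists_totalDegree_le_card_vanishing_on (𝓔 : Finset (AffineSubspace K (σ → K)))
    {p : σ → K} (hp : ∀ E ∈ 𝓔, p ∉ E) :
    ∃ G : MvPolynomial σ K, G.totalDegree ≤ #𝓔 ∧ (∀ E ∈ 𝓔, ∀ x ∈ E, eval x G = 0) ∧
      eval p G ≠ 0 := by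
  choose! G hGdeg hGE hGp using fun E hE => exists_totalDegree_le_one_vanishing_on (hp E hE)
  refine ⟨∏ E ∈ 𝓔, G E, ?_, fun E hE x hx => ?_, ?_⟩
  · calc (∏ E ∈ 𝓔, G E).totalDegree ≤ ∑ E ∈ 𝓔, (G E).totalDegree := totalDegree_finsetProd _ _
      _ ≤ ∑ _E ∈ 𝓔, 1 := Finset.sum_le_sum hGdeg
      _ = #𝓔 := by simp
  · rw [map_prod]
    exact Finset.prod_eq_zero hE (hGE E hE x hx)
  · rw [map_prod]
    exact Finset.prod_ne_zero_iff.2 hGp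

theorem exists_vanishing_off_of_cover (S T : Finset (σ → K))
    (𝓛 : Finset (AffineSubspace K (σ → K))) (hTS : T ⊆ S) {p : σ → K} (hpT : p ∈ T)
    (hp𝓛 : ∀ E ∈ 𝓛, p ∉ E) (hT𝓛 : ∀ y ∈ T, y ≠ p → ∃ E ∈ 𝓛, y ∈ E) :
    ∃ G : MvPolynomial σ K, G.totalDegree ≤ #𝓛 + (#S - #T) ∧
      (∀ y ∈ S, y ≠ p → eval y G = 0) ∧ eval p G ≠ 0 := by
  classical
  obtain ⟨G, hGdeg, hGE, hGp⟩ := exists_totalDegree_le_card_vanishing_on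
    (𝓛 ∪ (S \ T).image fun y => affineSpan K {y}) (p := p) (by
      simp only [mem_union, mem_image, mem_sdiff]
      rintro E (hE | ⟨y, ⟨-, hyT⟩, rfl⟩)
      · exact hp𝓛 E hE
      · rw [AffineSubspace.mem_affineSpan_singleton]
        rintro rfl
        exact hyT hpT)
  have hcard : #(𝓛 ∪ (S \ T).image fun y => affineSpan K {y}) ≤ #𝓛 + (#S - #T) := by
    grw [card_union_le, card_image_le, card_sdiff_of_subset hTS]
  refine ⟨G, hGdeg.trans hcard, fun y hyS hyp => ?_, hGp⟩
  by_cases hyT : y ∈ T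
  · obtain ⟨E, hE, hyE⟩ := hT𝓛 y hyT hyp
    exact hGE E (mem_union_left _ hE) y hyE
  · exact hGE _ (mem_union_right _ (mem_image_of_mem _ (mem_sdiff.2 ⟨hyS, hyT⟩))) y
      ((AffineSubspace.mem_affineSpan_singleton _ _).2 rfl)

end MvPolynomial

theorem exists_vanishing_off_of_collinear_triple {S : Finset (σ → K)}
    (hS : ¬Collinear K (S : Set (σ → K))) {a b c : σ → K} (ha : a ∈ S) (hb : b ∈ S) (hc : c ∈ S)
    (hab : a ≠ b) (hac : a ≠ c) (hbc : b ≠ c) (habc : Collinear K {a, b, c}) :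
    ∃ p ∈ S, ∃ G : MvPolynomial σ K, G.totalDegree ≤ #S - 3 ∧
      (∀ y ∈ S, y ≠ p → eval y G = 0) ∧ eval p G ≠ 0 := by
  classical
  obtain ⟨p, hpS, hp⟩ : ∃ p ∈ S, p ∉ line[K, a, b] := by
    by_contra! h
    exact hS (collinear_of_subset_affineSpan_pair h)
  have hc' : c ∈ line[K, a, b] :=
    habc.mem_affineSpan_of_mem_of_ne (by simp) (by simp) (by simp) hab
  have hpabc : p ∉ ({a, b, c} : Finset (σ → K)) := by
    simp only [mem_insert, mem_singleton, not_or]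
    refine ⟨?_, ?_, ?_⟩ <;> rintro rfl
    exacts [hp (left_mem_affineSpan_pair K _ _), hp (right_mem_affineSpan_pair K _ _), hp hc']
  have hTS : {p, a, b, c} ⊆ S := by simp [insert_subset_iff, hpS, ha, hb, hc]
  have hT : #({p, a, b, c} : Finset (σ → K)) = 4 := by
    rw [card_insert_of_notMem hpabc, card_eq_three.2 ⟨a, b, c, hab, hac, hbc, rfl⟩]
  obtain ⟨G, hGdeg, hG⟩ := exists_vanishing_off_of_cover S {p, a, b, c} {line[K, a, b]}
    hTS (mem_insert_self p _) (by simpa using hp) (by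
      simp only [mem_insert, mem_singleton, exists_eq_left]
      rintro y (rfl | rfl | rfl | rfl) hyp
      exacts [absurd rfl hyp, left_mem_affineSpan_pair K _ _, right_mem_affineSpan_pair K _ _, hc'])
  refine ⟨p, hpS, G, hGdeg.trans ?_, hG⟩
  have := card_le_card hTS
  simp only [card_singleton]
  omega

theorem exists_vanishing_off_of_no_three_collinear {S : Finset (σ → K)} (h5 : 5 ≤ #S)
    (hS : ∀ a ∈ S, ∀ b ∈ S, ∀ c ∈ S, a ≠ b → a ≠ c → b ≠ c → ¬Collinear K {a, b, c}) :
    ∃ p ∈ S, ∃ G : MvPolynomial σ K, G.totalDegree ≤ #S - 3 ∧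
      (∀ y ∈ S, y ≠ p → eval y G = 0) ∧ eval p G ≠ 0 := by
  classical
  obtain ⟨p, hpS⟩ : S.Nonempty := card_pos.1 (by omega)
  have hp : ∀ {a b}, a ∈ S → b ∈ S → a ≠ p → b ≠ p → a ≠ b → p ∉ line[K, a, b] :=
    fun ha hb hap hbp hab hpab =>
      hS p hpS _ ha _ hb hap.symm hbp.symm hab (collinear_insert_of_mem_affineSpan_pair hpab)
  obtain ⟨A, hA, hA2⟩ := exists_subset_card_eq (s := S.erase p) (n := 2)
    (by rw [card_erase_of_mem hpS]; omega)
  obtain ⟨C, hC, hC2⟩ := exists_subset_card_eq (s := S.erase p \ A) (n := 2)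
    (by rw [card_sdiff_of_subset hA, card_erase_of_mem hpS]; omega)
  obtain ⟨a, b, hab, rfl⟩ := card_eq_two.1 hA2
  obtain ⟨c, d, hcd, rfl⟩ := card_eq_two.1 hC2
  simp only [insert_subset_iff, singleton_subset_iff, mem_erase, mem_sdiff, mem_insert,
    mem_singleton, not_or] at hA hC
  obtain ⟨⟨hap, haS⟩, hbp, hbS⟩ := hA
  obtain ⟨⟨⟨hcp, hcS⟩, hca, hcb⟩, ⟨hdp, hdS⟩, hda, hdb⟩ := hC
  have hTS : insert p ({a, b} ∪ {c, d}) ⊆ S := by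
    simp [insert_subset_iff, hpS, haS, hbS, hcS, hdS]
  have hT : #(insert p ({a, b} ∪ {c, d})) = 5 := by
    rw [card_insert_of_notMem (by simp [hap.symm, hbp.symm, hcp.symm, hdp.symm]),
      card_union_of_disjoint (by simp [hca, hcb, hda, hdb]), hA2, hC2]
  obtain ⟨G, hGdeg, hG⟩ := exists_vanishing_off_of_cover S _ {line[K, a, b], line[K, c, d]} hTS
    (mem_insert_self p _)
    (by simp [hp haS hbS hap hbp hab, hp hcS hdS hcp hdp hcd]) (by
      simp only [mem_insert, mem_union, mem_singleton, exists_eq_or_imp, exists_eq_left]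
      rintro y (rfl | (rfl | rfl) | rfl | rfl) hyp
      · exact absurd rfl hyp
      · exact .inl (left_mem_affineSpan_pair K _ _)
      · exact .inl (right_mem_affineSpan_pair K _ _)
      · exact .inr (left_mem_affineSpan_pair K _ _)
      · exact .inr (right_mem_affineSpan_pair K _ _))
  refine ⟨p, hpS, G, hGdeg.trans ?_, hG⟩
  have := card_le_card hTS
  have : #({line[K, a, b], line[K, c, d]} : Finset _) ≤ 2 := card_le_two
  omega

theorem exists_vanishing_off_of_not_collinear {S : Finset (σ → K)} (h5 : 5 ≤ #S)
    (hS : ¬Collinear K (S : Set (σ → K))) :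
    ∃ p ∈ S, ∃ G : MvPolynomial σ K, G.totalDegree ≤ #S - 3 ∧
      (∀ y ∈ S, y ≠ p → eval y G = 0) ∧ eval p G ≠ 0 := by
  by_cases h3 : ∃ a ∈ S, ∃ b ∈ S, ∃ c ∈ S, a ≠ b ∧ a ≠ c ∧ b ≠ c ∧ Collinear K {a, b, c}
  · obtain ⟨a, ha, b, hb, c, hc, hab, hac, hbc, habc⟩ := h3
    exact exists_vanishing_off_of_collinear_triple hS ha hb hc hab hac hbc habc
  · push Not at h3
    exact exists_vanishing_off_of_no_three_collinear h5 h3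

end

theorem stmt3_general {F : Type} [Field F] [Fintype F] [DecidableEq F] {m s : ℕ}
    (hq : 5 ≤ Fintype.card F) (hm : 2 ≤ m) (hs2 : s ≤ Fintype.card F - 4)
    (f : (Fin m → F) → F)
    (hf : RM F ((m - 1) * (Fintype.card F - 1) + s) m f)
    (hw : wt f = Fintype.card F - s + 1) :
    ∃ p v : Fin m → F, ∀ x : Fin m → F, f x ≠ 0 → ∃ c : F, x = p + c • v := by
  obtain ⟨P, hPdeg, hPf⟩ := hf
  set S := univ.filter fun x => f x ≠ 0
  suffices hS : Collinear F (S : Set (Fin m → F)) by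
    obtain ⟨p, v, h⟩ := (collinear_iff_exists_forall_eq_smul_vadd _).1 hS
    exact ⟨p, v, fun x hx => (h x (by simpa [S] using hx)).imp fun c hc => hc.trans (add_comm _ _)⟩
  by_contra hS
  have hcard : #S = Fintype.card F - s + 1 := hw
  obtain ⟨p, hpS, G, hGdeg, hGS, hGp⟩ :=
    exists_vanishing_off_of_not_collinear (by omega) hS
  have hdeg : (P * G).totalDegree < (Fintype.card F - 1) * Fintype.card (Fin m) := by
    obtain ⟨n, rfl⟩ : ∃ n, m = n + 1 := ⟨m - 1, by omega⟩
    grw [totalDegree_mul, hPdeg, hGdeg]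
    simp only [Fintype.card_fin, Nat.add_sub_cancel, hcard, mul_add, mul_one, mul_comm n]
    omega
  have hPG := eval_eq_zero_of_forall_ne (P * G) hdeg p fun x hx => by
    by_cases hxS : x ∈ S
    · rw [map_mul, hGS x hxS hx, mul_zero]
    · rw [map_mul, hPf, show f x = 0 by simpa [S] using hxS, zero_mul]
  rw [map_mul, hPf] at hPG
  exact mul_ne_zero (by simpa [S] using hpS) hGp hPG

/-- Second weight codewords of `R_q((m-1)(q-1)+s, m)`, `1 ≤ s ≤ q-4`, have support
included in an affine line. -/
theorem stmt3 {F : Type} [Field F] [Fintype F] [DecidableEq F] {m s : ℕ}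
    (hq : 5 ≤ Fintype.card F) (hm : 2 ≤ m) (hs1 : 1 ≤ s) (hs2 : s ≤ Fintype.card F - 4)
    (f : (Fin m → F) → F)
    (hf : RM F ((m - 1) * (Fintype.card F - 1) + s) m f)
    (hw : wt f = Fintype.card F - s + 1) :
    ∃ p v : Fin m → F, ∀ x : Fin m → F, f x ≠ 0 → ∃ c : F, x = p + c • v :=
  stmt3_general hq hm hs2 f hf hw
end

section
/- Let $q\geq3$, $m\geq2$, and let $f\in R_q((m-1)(q-1)+q-3,m)$ with $|f|=4$. Then the four points of the support of $f$ lie in a common affine plane of $\mathbb{F}_q^m$; more precisely, writing the support as $\{\omega^{(a)},\omega^{(b)},\omega^{(c)},\omega^{(d)}\}$ with nonzero values $a,b,c,d$ of $f$ at these points respectively, one has $a+b+c+d=0$ and $a\omega^{(a)}+b\omega^{(b)}+c\omega^{(c)}+d\omega^{(d)}=0$ in $\mathbb{F}_q^m$. -/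
/-- A weight-4 codeword of `R_q((m-1)(q-1)+q-3, m)` has its four support points in a common
affine plane; precisely, the values sum to `0` and the weighted sum of the points is `0`. -/
theorem stmt4 {F : Type} [Field F] [Fintype F] [DecidableEq F] {m : ℕ}
    (hq : 3 ≤ Fintype.card F) (hm : 2 ≤ m)
    (f : (Fin m → F) → F)
    (hf : RM F ((m - 1) * (Fintype.card F - 1) + (Fintype.card F - 3)) m f)
    (hw : wt f = 4) :
    (∃ p v w : Fin m → F, ∀ x : Fin m → F, f x ≠ 0 → ∃ c d : F, x = p + c • v + d • w) ∧
    ∀ w1 w2 w3 w4 : Fin m → F,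
      ({x : Fin m → F | f x ≠ 0} = {w1, w2, w3, w4} ∧
        w1 ≠ w2 ∧ w1 ≠ w3 ∧ w1 ≠ w4 ∧ w2 ≠ w3 ∧ w2 ≠ w4 ∧ w3 ≠ w4) →
      f w1 + f w2 + f w3 + f w4 = 0 ∧
      f w1 • w1 + f w2 • w2 + f w3 • w3 + f w4 • w4 = 0 := by
  classical
  obtain ⟨P, hPdeg, hPeval⟩ := hf
  -- the degree bound arithmetic
  have key : (m - 1) * (Fintype.card F - 1) + (Fintype.card F - 3) + 2
      = (Fintype.card F - 1) * m := by
    obtain ⟨m', rfl⟩ : ∃ m', m = m' + 2 := ⟨m - 2, by omega⟩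
    obtain ⟨q', hq'⟩ : ∃ q', Fintype.card F = q' + 3 := ⟨Fintype.card F - 3, by omega⟩
    rw [hq']
    have h1 : m' + 2 - 1 = m' + 1 := rfl
    have h2 : q' + 3 - 1 = q' + 2 := rfl
    have h3 : q' + 3 - 3 = q' := rfl
    rw [h1, h2, h3]; ring
  have hdeg2 : P.totalDegree + 2 ≤ (Fintype.card F - 1) * m := by omega
  -- sum of f over all points is zero
  have hsum0 : ∑ x : Fin m → F, f x = 0 := by
    have h := MvPolynomial.sum_eval_eq_zero P (by rw [Fintype.card_fin]; omega)
    calc ∑ x : Fin m → F, f x = ∑ x : Fin m → F, MvPolynomial.eval x P := by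
          exact Finset.sum_congr rfl fun x _ => (hPeval x).symm
      _ = 0 := h
  -- weighted sums are zero
  have hsum1 : ∀ i : Fin m, ∑ x : Fin m → F, x i * f x = 0 := by
    intro i
    have hdeg : (MvPolynomial.X i * P).totalDegree
        < (Fintype.card F - 1) * Fintype.card (Fin m) := by
      rw [Fintype.card_fin]
      have h1 := MvPolynomial.totalDegree_mul (MvPolynomial.X i) P
      have h2 : (MvPolynomial.X i : MvPolynomial (Fin m) F).totalDegree = 1 :=
        MvPolynomial.totalDegree_X i
      omega
    have h := MvPolynomial.sum_eval_eq_zero _ hdeg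
    calc ∑ x : Fin m → F, x i * f x
        = ∑ x : Fin m → F, MvPolynomial.eval x (MvPolynomial.X i * P) := by
          refine Finset.sum_congr rfl fun x _ => ?_
          rw [map_mul, MvPolynomial.eval_X, hPeval]
      _ = 0 := h
  -- part 2
  have part2 : ∀ w1 w2 w3 w4 : Fin m → F,
      ({x : Fin m → F | f x ≠ 0} = {w1, w2, w3, w4} ∧
        w1 ≠ w2 ∧ w1 ≠ w3 ∧ w1 ≠ w4 ∧ w2 ≠ w3 ∧ w2 ≠ w4 ∧ w3 ≠ w4) →
      f w1 + f w2 + f w3 + f w4 = 0 ∧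
      f w1 • w1 + f w2 • w2 + f w3 • w3 + f w4 • w4 = 0 := by
    rintro w1 w2 w3 w4 ⟨hset, h12, h13, h14, h23, h24, h34⟩
    have hsub : ∀ g : (Fin m → F) → F, (∀ x, f x = 0 → g x = 0) →
        ∑ x : Fin m → F, g x = g w1 + g w2 + g w3 + g w4 := by
      intro g hg
      have heq : ∑ x : Fin m → F, g x = ∑ x ∈ ({w1, w2, w3, w4} : Finset (Fin m → F)), g x := by
        refine (Finset.sum_subset (Finset.subset_univ _) ?_).symm
        intro x _ hx
        apply hg
        by_contra hfx
        have hx' : x ∈ ({w1, w2, w3, w4} : Set (Fin m → F)) := by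
          rw [← hset]; exact hfx
        simp only [Set.mem_insert_iff, Set.mem_singleton_iff] at hx'
        simp only [Finset.mem_insert, Finset.mem_singleton] at hx
        tauto
      rw [heq]
      rw [Finset.sum_insert (by simp [h12, h13, h14]),
        Finset.sum_insert (by simp [h23, h24]),
        Finset.sum_insert (by simp [h34]), Finset.sum_singleton, add_assoc, add_assoc]
    constructor
    · rw [← hsub f (fun x h => h)]; exact hsum0
    · funext i
      have h1 := hsub (fun x => x i * f x) (fun x h => by simp [h])
      rw [hsum1 i] at h1
      simp only [Pi.add_apply, Pi.smul_apply, Pi.zero_apply, smul_eq_mul]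
      linear_combination -h1
  refine ⟨?_, part2⟩
  -- extract the four support points
  have hw' : (Finset.univ.filter fun x : Fin m → F => f x ≠ 0).card = 4 := hw
  obtain ⟨w1, t, hw1t, hins, ht3⟩ := Finset.card_eq_succ.mp hw'
  obtain ⟨w2, w3, w4, h23, h24, h34, rfl⟩ := Finset.card_eq_three.mp ht3
  have h12 : w1 ≠ w2 := by rintro rfl; exact hw1t (by simp)
  have h13 : w1 ≠ w3 := by rintro rfl; exact hw1t (by simp)
  have h14 : w1 ≠ w4 := by rintro rfl; exact hw1t (by simp)
  have hset : {x : Fin m → F | f x ≠ 0} = {w1, w2, w3, w4} := by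
    ext x
    have : x ∈ (Finset.univ.filter fun x : Fin m → F => f x ≠ 0) ↔
        x ∈ (insert w1 {w2, w3, w4} : Finset (Fin m → F)) := by rw [hins]
    simpa using this
  obtain ⟨hA, hB⟩ := part2 w1 w2 w3 w4 ⟨hset, h12, h13, h14, h23, h24, h34⟩
  have hmem : ∀ y, y ∈ ({w1, w2, w3, w4} : Set (Fin m → F)) → f y ≠ 0 := by
    intro y hy; rw [← hset] at hy; exact hy
  have hfw4 : f w4 ≠ 0 := hmem w4 (by simp)
  refine ⟨w1, w2 - w1, w3 - w1, ?_⟩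
  intro x hx
  have hx' : x ∈ ({w1, w2, w3, w4} : Set (Fin m → F)) := by rw [← hset]; exact hx
  simp only [Set.mem_insert_iff, Set.mem_singleton_iff] at hx'
  rcases hx' with h | h | h | h
  · exact ⟨0, 0, by rw [h]; simp⟩
  · refine ⟨1, 0, ?_⟩
    rw [h]; funext i
    simp only [Pi.add_apply, Pi.smul_apply, Pi.sub_apply, smul_eq_mul, one_mul, zero_mul,
      add_zero]
    ring
  · refine ⟨0, 1, ?_⟩
    rw [h]; funext i
    simp only [Pi.add_apply, Pi.smul_apply, Pi.sub_apply, smul_eq_mul, one_mul, zero_mul,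
      add_zero, zero_add]
    ring
  · refine ⟨-(f w2) / f w4, -(f w3) / f w4, ?_⟩
    rw [h]; funext i
    have hBi : f w1 * w1 i + f w2 * w2 i + f w3 * w3 i + f w4 * w4 i = 0 := by
      have := congrFun hB i
      simpa using this
    simp only [Pi.add_apply, Pi.smul_apply, Pi.sub_apply, smul_eq_mul]
    field_simp
    linear_combination hBi - w1 i * hA
end

section
/- Let $q\geq3$, $m\geq2$, three points $\omega_1,\omega_2,\omega_3\in\mathbb{F}_q^m$, and set $\omega_4=\omega_1+\omega_2-\omega_3$; assume $\omega_1,\omega_2,\omega_3,\omega_4$ are pairwise distinct. Then $f=\mathbf{1}_{\omega_1}+\mathbf{1}_{\omega_2}-\mathbf{1}_{\omega_3}-\mathbf{1}_{\omega_4}$ belongs to $R_q((m-1)(q-1)+q-3,m)$, i.e., its reduced degree is at most $m(q-1)-2$. -/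
open MvPolynomial Finset

/-- Expansion of a product of trinomials, isolating the top two "layers". -/
lemma expand_prod {F : Type} [Field F] {m d : ℕ} (hd : 2 ≤ d)
    (A b rr : Fin m → MvPolynomial (Fin m) F)
    (hA : ∀ i, (A i).totalDegree ≤ d) (hb : ∀ i, (b i).totalDegree + 1 ≤ d)
    (hr : ∀ i, (rr i).totalDegree + 2 ≤ d) (s : Finset (Fin m)) :
    ∃ E : MvPolynomial (Fin m) F, (∏ i ∈ s, (A i + b i + rr i)) =
      (∏ i ∈ s, A i) + (∑ i ∈ s, b i * ∏ j ∈ s.erase i, A j) + E ∧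
      (E.totalDegree + 2 ≤ s.card * d ∨ E = 0) := by
  induction s using Finset.induction with
  | empty => exact ⟨0, by simp, Or.inr rfl⟩
  | @insert i t hit IH =>
    obtain ⟨E, hEeq, hEdeg⟩ := IH
    -- degree bounds
    have hfac : ∀ j, (A j + b j + rr j).totalDegree ≤ d := by
      intro j
      refine le_trans (totalDegree_add _ _) (max_le (le_trans (totalDegree_add _ _)
        (max_le (hA j) (by have := hb j; omega))) (by have := hr j; omega))
    have hPt : (∏ j ∈ t, (A j + b j + rr j)).totalDegree ≤ t.card * d := by
      refine le_trans (totalDegree_finset_prod _ _) ?_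
      calc ∑ j ∈ t, (A j + b j + rr j).totalDegree ≤ ∑ _j ∈ t, d :=
            Finset.sum_le_sum fun j _ => hfac j
        _ = t.card * d := by rw [Finset.sum_const, smul_eq_mul]
    have hTt : (∏ j ∈ t, A j).totalDegree ≤ t.card * d := by
      refine le_trans (totalDegree_finset_prod _ _) ?_
      calc ∑ j ∈ t, (A j).totalDegree ≤ ∑ _j ∈ t, d := Finset.sum_le_sum fun j _ => hA j
        _ = t.card * d := by rw [Finset.sum_const, smul_eq_mul]
    have hSt : (∑ j ∈ t, b j * ∏ k ∈ t.erase j, A k).totalDegree + 1 ≤ t.card * d ∨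
        (∑ j ∈ t, b j * ∏ k ∈ t.erase j, A k) = 0 := by
      rcases t.eq_empty_or_nonempty with h | h
      · right; simp [h]
      · left
        obtain ⟨n, hn⟩ : ∃ n, t.card = n + 1 :=
          ⟨t.card - 1, by have := Finset.card_pos.mpr h; omega⟩
        have : (∑ j ∈ t, b j * ∏ k ∈ t.erase j, A k).totalDegree ≤ n * d + (d - 1) := by
          refine le_trans (totalDegree_finset_sum _ _) (Finset.sup_le fun j hj => ?_)
          have h1 : (∏ k ∈ t.erase j, A k).totalDegree ≤ n * d := by
            refine le_trans (totalDegree_finset_prod _ _) ?_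
            calc ∑ k ∈ t.erase j, (A k).totalDegree ≤ ∑ _k ∈ t.erase j, d :=
                  Finset.sum_le_sum fun k _ => hA k
              _ = (t.erase j).card * d := by rw [Finset.sum_const, smul_eq_mul]
              _ = n * d := by rw [Finset.card_erase_of_mem hj, hn, Nat.add_sub_cancel]
          refine le_trans (totalDegree_mul _ _) ?_
          have := hb j; omega
        have hd1 : 1 ≤ d := by omega
        calc (∑ j ∈ t, b j * ∏ k ∈ t.erase j, A k).totalDegree + 1 ≤ n * d + (d-1) + 1 :=
              by omega
          _ ≤ t.card * d := by rw [hn]; ring_nf; omega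
    refine ⟨A i * E + b i * (∑ j ∈ t, b j * ∏ k ∈ t.erase j, A k) + b i * E
      + rr i * (∏ j ∈ t, (A j + b j + rr j)), ?_, ?_⟩
    · rw [Finset.prod_insert hit, hEeq, Finset.prod_insert hit]
      rw [Finset.sum_insert hit]
      rw [Finset.erase_insert hit]
      have hsum : ∑ j ∈ t, b j * ∏ k ∈ (insert i t).erase j, A k
          = A i * ∑ j ∈ t, b j * ∏ k ∈ t.erase j, A k := by
        rw [Finset.mul_sum]
        refine Finset.sum_congr rfl fun j hj => ?_
        have hji : j ≠ i := fun h => hit (h ▸ hj)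
        rw [Finset.erase_insert_of_ne hji.symm]
        rw [Finset.prod_insert (fun h => hit (Finset.mem_of_mem_erase h))]
        ring
      rw [hsum]
      ring
    · left
      have card_ins : (insert i t).card = t.card + 1 := Finset.card_insert_of_notMem hit
      rw [card_ins]
      -- bound each of the four summands
      have b1 : (A i * E).totalDegree + 2 ≤ (t.card + 1) * d := by
        rcases hEdeg with h | h
        · have := totalDegree_mul (A i) E
          have := hA i
          nlinarith
        · rw [h, mul_zero]; simp [totalDegree_zero]; nlinarith
      have b2 : (b i * (∑ j ∈ t, b j * ∏ k ∈ t.erase j, A k)).totalDegree + 2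
          ≤ (t.card + 1) * d := by
        rcases hSt with h | h
        · have := totalDegree_mul (b i) (∑ j ∈ t, b j * ∏ k ∈ t.erase j, A k)
          have := hb i
          nlinarith
        · rw [h, mul_zero]; simp [totalDegree_zero]; nlinarith
      have b3 : (b i * E).totalDegree + 2 ≤ (t.card + 1) * d := by
        rcases hEdeg with h | h
        · have := totalDegree_mul (b i) E
          have := hb i
          nlinarith
        · rw [h, mul_zero]; simp [totalDegree_zero]; nlinarith
      have b4 : (rr i * ∏ j ∈ t, (A j + b j + rr j)).totalDegree + 2 ≤ (t.card + 1) * d := by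
        have := totalDegree_mul (rr i) (∏ j ∈ t, (A j + b j + rr j))
        have := hr i
        nlinarith
      have := totalDegree_add (A i * E + b i * (∑ j ∈ t, b j * ∏ k ∈ t.erase j, A k) + b i * E)
        (rr i * ∏ j ∈ t, (A j + b j + rr j))
      have := totalDegree_add (A i * E + b i * (∑ j ∈ t, b j * ∏ k ∈ t.erase j, A k)) (b i * E)
      have := totalDegree_add (A i * E) (b i * (∑ j ∈ t, b j * ∏ k ∈ t.erase j, A k))
      simp only [max_le_iff, sup_le_iff] at *
      omega

/-- Decomposition of a single factor `1 - (Xᵢ - a)^(q-1)` into its top two monomials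
plus a remainder of degree at most `q-3`. -/
lemma factor_decomp {F : Type} [Field F] [Fintype F] {m : ℕ} (hq : 3 ≤ Fintype.card F)
    (i : Fin m) (a : F) :
    ∃ r : MvPolynomial (Fin m) F,
      (1 - (X i - C a) ^ (Fintype.card F - 1) : MvPolynomial (Fin m) F) =
        (-(X i ^ (Fintype.card F - 1))) + C a * (-(X i ^ (Fintype.card F - 2))) + r ∧
      r.totalDegree + 2 ≤ Fintype.card F - 1 := by
  obtain ⟨e, he⟩ : ∃ e, Fintype.card F - 1 = e + 2 := ⟨Fintype.card F - 3, by omega⟩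
  have hd2 : Fintype.card F - 2 = e + 1 := by omega
  refine ⟨1 - ∑ k ∈ Finset.range (e + 1),
      X i ^ k * (C (-a)) ^ (e + 2 - k) * ((e + 2).choose k : MvPolynomial (Fin m) F), ?_, ?_⟩
  · rw [he, hd2]
    have hXa : (X i - C a : MvPolynomial (Fin m) F) = X i + C (-a) := by rw [map_neg]; ring
    rw [hXa, add_pow, Finset.sum_range_succ, Finset.sum_range_succ]
    have h1 : (X i : MvPolynomial (Fin m) F) ^ (e + 2) * C (-a) ^ (e + 2 - (e + 2)) *
        ((e + 2).choose (e + 2) : MvPolynomial (Fin m) F) = X i ^ (e + 2) := by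
      simp
    have h2 : (X i : MvPolynomial (Fin m) F) ^ (e + 1) * C (-a) ^ (e + 2 - (e + 1)) *
        ((e + 2).choose (e + 1) : MvPolynomial (Fin m) F) = C a * X i ^ (e + 1) := by
      rw [Nat.choose_succ_self_right]
      have hcnat : ((e + 2 : ℕ) : MvPolynomial (Fin m) F) = C ((e + 2 : ℕ) : F) :=
        (map_natCast (C : F →+* MvPolynomial (Fin m) F) _).symm
      have hcast : ((e + 2 : ℕ) : F) = -1 := by
        have h0 : ((Fintype.card F : ℕ) : F) = 0 := Nat.cast_card_eq_zero F
        have h' : (e + 2 : ℕ) = Fintype.card F - 1 := he.symm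
        rw [h', Nat.cast_sub (by omega), h0]
        simp
      rw [hcnat, hcast]
      have : (e + 2 - (e + 1)) = 1 := by omega
      rw [this]
      simp only [pow_one, map_neg, map_one]
      ring
    rw [h1, h2]
    ring
  · rw [he]
    have hs : (∑ k ∈ Finset.range (e + 1),
        X i ^ k * (C (-a)) ^ (e + 2 - k) *
          ((e + 2).choose k : MvPolynomial (Fin m) F)).totalDegree ≤ e := by
      refine le_trans (totalDegree_finset_sum _ _) (Finset.sup_le fun k hk => ?_)
      have hk' : k ≤ e := by simpa using Nat.lt_succ_iff.mp (Finset.mem_range.mp hk)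
      calc (X i ^ k * (C (-a)) ^ (e + 2 - k) *
            ((e + 2).choose k : MvPolynomial (Fin m) F)).totalDegree
          ≤ (X i ^ k * (C (-a)) ^ (e + 2 - k)).totalDegree +
            ((e + 2).choose k : MvPolynomial (Fin m) F).totalDegree := totalDegree_mul _ _
        _ ≤ (X i ^ k).totalDegree + ((C (-a) : MvPolynomial (Fin m) F) ^ (e + 2 - k)).totalDegree
            + ((e + 2).choose k : MvPolynomial (Fin m) F).totalDegree := by
              have := totalDegree_mul (X i ^ k : MvPolynomial (Fin m) F) ((C (-a)) ^ (e + 2 - k))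
              omega
        _ ≤ k + 0 + 0 := by
              have h1 : (X i ^ k : MvPolynomial (Fin m) F).totalDegree = k := totalDegree_X_pow _ _
              have h2 : ((C (-a) : MvPolynomial (Fin m) F) ^ (e + 2 - k)).totalDegree = 0 := by
                rw [← map_pow, totalDegree_C]
              have h3 : ((e + 2).choose k : MvPolynomial (Fin m) F).totalDegree = 0 := by
                rw [show (((e + 2).choose k : ℕ) : MvPolynomial (Fin m) F)
                  = C (((e + 2).choose k : ℕ) : F) from
                  (map_natCast (C : F →+* MvPolynomial (Fin m) F) _).symm, totalDegree_C]
              omega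
        _ ≤ e := by omega
    have := totalDegree_sub (1 : MvPolynomial (Fin m) F) (∑ k ∈ Finset.range (e + 1),
        X i ^ k * (C (-a)) ^ (e + 2 - k) * ((e + 2).choose k : MvPolynomial (Fin m) F))
    simp only [totalDegree_one, sup_le_iff, max_le_iff] at *
    omega

/-- For points `ω₁, ω₂, ω₃` and `ω₄ = ω₁ + ω₂ - ω₃`, all pairwise distinct, the function
`1_{ω₁} + 1_{ω₂} - 1_{ω₃} - 1_{ω₄}` lies in `R_q((m-1)(q-1)+q-3, m)`. -/
theorem stmt6 {F : Type} [Field F] [Fintype F] [DecidableEq F] {m : ℕ}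
    (hq : 3 ≤ Fintype.card F) (hm : 2 ≤ m)
    (ω1 ω2 ω3 ω4 : Fin m → F) (hω4 : ω4 = ω1 + ω2 - ω3)
    (h12 : ω1 ≠ ω2) (h13 : ω1 ≠ ω3) (h14 : ω1 ≠ ω4)
    (h23 : ω2 ≠ ω3) (h24 : ω2 ≠ ω4) (h34 : ω3 ≠ ω4) :
    RM F ((m - 1) * (Fintype.card F - 1) + (Fintype.card F - 3)) m
      (fun x => (if x = ω1 then (1 : F) else 0) + (if x = ω2 then 1 else 0)
        - (if x = ω3 then 1 else 0) - (if x = ω4 then 1 else 0)) := by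
  classical
  set P : (Fin m → F) → MvPolynomial (Fin m) F :=
    fun a => ∏ i : Fin m, (1 - (X i - C (a i)) ^ (Fintype.card F - 1)) with hP
  have hPeval : ∀ a x : Fin m → F, eval x (P a) = if x = a then 1 else 0 := by
    intro a x
    by_cases hxa : x = a
    · subst hxa
      rw [if_pos rfl, hP]
      simp only [map_prod, map_sub, map_one, map_pow, eval_X, eval_C]
      refine Finset.prod_eq_one fun i _ => ?_
      rw [sub_self, zero_pow (by omega), sub_zero]
    · rw [if_neg hxa, hP]
      obtain ⟨i, hi⟩ : ∃ i, x i ≠ a i := by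
        by_contra h; push_neg at h; exact hxa (funext h)
      simp only [map_prod, map_sub, map_one, map_pow, eval_X, eval_C]
      refine Finset.prod_eq_zero (Finset.mem_univ i) ?_
      rw [FiniteField.pow_card_sub_one_eq_one _ (sub_ne_zero.mpr hi), sub_self]
  have hd : 2 ≤ Fintype.card F - 1 := by omega
  have hdecomp : ∀ a : Fin m → F, ∃ E : MvPolynomial (Fin m) F,
      P a = (∏ i : Fin m, (-(X i ^ (Fintype.card F - 1)))) +
        (∑ i : Fin m, (C (a i) * (-(X i ^ (Fintype.card F - 2)))) *
          ∏ j ∈ Finset.univ.erase i, (-(X j ^ (Fintype.card F - 1)))) + E ∧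
      (E.totalDegree + 2 ≤ m * (Fintype.card F - 1) ∨ E = 0) := by
    intro a
    choose r hr1 hr2 using fun i => factor_decomp hq i (a i)
    obtain ⟨E, hE1, hE2⟩ := expand_prod hd
      (fun i => -(X i ^ (Fintype.card F - 1)))
      (fun i => C (a i) * (-(X i ^ (Fintype.card F - 2))))
      r
      (fun i => by rw [totalDegree_neg, totalDegree_X_pow])
      (fun i => by
        show (C (a i) * (-(X i ^ (Fintype.card F - 2)))).totalDegree + 1 ≤ Fintype.card F - 1
        have := totalDegree_mul (C (a i) : MvPolynomial (Fin m) F) (-(X i ^ (Fintype.card F - 2)))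
        rw [totalDegree_C, totalDegree_neg, totalDegree_X_pow] at this
        omega)
      hr2 Finset.univ
    refine ⟨E, ?_, ?_⟩
    · rw [hP]
      have : ∀ i : Fin m, (1 - (X i - C (a i)) ^ (Fintype.card F - 1) : MvPolynomial (Fin m) F)
          = (-(X i ^ (Fintype.card F - 1))) + C (a i) * (-(X i ^ (Fintype.card F - 2))) + r i :=
        hr1
      calc (∏ i : Fin m, (1 - (X i - C (a i)) ^ (Fintype.card F - 1)))
          = ∏ i : Fin m, ((-(X i ^ (Fintype.card F - 1)))
            + C (a i) * (-(X i ^ (Fintype.card F - 2))) + r i) :=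
            Finset.prod_congr rfl fun i _ => this i
        _ = _ := by rw [hE1]
    · simpa [Finset.card_univ] using hE2
  obtain ⟨E1, hE1eq, hE1d⟩ := hdecomp ω1
  obtain ⟨E2, hE2eq, hE2d⟩ := hdecomp ω2
  obtain ⟨E3, hE3eq, hE3d⟩ := hdecomp ω3
  obtain ⟨E4, hE4eq, hE4d⟩ := hdecomp ω4
  -- cancellation of the linear layer
  have hScancel :
      (∑ i : Fin m, (C (ω1 i) * (-(X i ^ (Fintype.card F - 2)))) *
          ∏ j ∈ Finset.univ.erase i, (-(X j ^ (Fintype.card F - 1))))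
      + (∑ i : Fin m, (C (ω2 i) * (-(X i ^ (Fintype.card F - 2)))) *
          ∏ j ∈ Finset.univ.erase i, (-(X j ^ (Fintype.card F - 1))))
      - (∑ i : Fin m, (C (ω3 i) * (-(X i ^ (Fintype.card F - 2)))) *
          ∏ j ∈ Finset.univ.erase i, (-(X j ^ (Fintype.card F - 1))))
      - (∑ i : Fin m, (C (ω4 i) * (-(X i ^ (Fintype.card F - 2)))) *
          ∏ j ∈ Finset.univ.erase i, (-(X j ^ (Fintype.card F - 1))))
      = (0 : MvPolynomial (Fin m) F) := by
    rw [← Finset.sum_add_distrib, ← Finset.sum_sub_distrib, ← Finset.sum_sub_distrib]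
    refine Finset.sum_eq_zero fun i _ => ?_
    have h4i : ω4 i = ω1 i + ω2 i - ω3 i := by rw [hω4]; simp
    have hC : (C (ω1 i) + C (ω2 i) - C (ω3 i) - C (ω4 i) : MvPolynomial (Fin m) F) = 0 := by
      rw [h4i, map_sub, map_add]
      ring
    have : (C (ω1 i) * (-(X i ^ (Fintype.card F - 2)))) *
          ∏ j ∈ Finset.univ.erase i, (-(X j ^ (Fintype.card F - 1)))
        + (C (ω2 i) * (-(X i ^ (Fintype.card F - 2)))) *
          ∏ j ∈ Finset.univ.erase i, (-(X j ^ (Fintype.card F - 1)))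
        - (C (ω3 i) * (-(X i ^ (Fintype.card F - 2)))) *
          ∏ j ∈ Finset.univ.erase i, (-(X j ^ (Fintype.card F - 1)))
        - (C (ω4 i) * (-(X i ^ (Fintype.card F - 2)))) *
          ∏ j ∈ Finset.univ.erase i, (-(X j ^ (Fintype.card F - 1)))
        = (C (ω1 i) + C (ω2 i) - C (ω3 i) - C (ω4 i)) * ((-(X i ^ (Fintype.card F - 2))) *
          ∏ j ∈ Finset.univ.erase i, (-(X j ^ (Fintype.card F - 1)))) := by ring
    rw [this, hC, zero_mul]
  have hQ : P ω1 + P ω2 - P ω3 - P ω4 = E1 + E2 - E3 - E4 := by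
    rw [hE1eq, hE2eq, hE3eq, hE4eq]
    linear_combination hScancel
  have key : (m - 1) * (Fintype.card F - 1) + (Fintype.card F - 3) + 2
      = m * (Fintype.card F - 1) := by
    obtain ⟨m', rfl⟩ : ∃ m', m = m' + 1 := ⟨m - 1, by omega⟩
    obtain ⟨c, hc⟩ : ∃ c, Fintype.card F = c + 3 := ⟨Fintype.card F - 3, by omega⟩
    rw [hc]
    simp only [Nat.add_sub_cancel]
    ring_nf
    omega
  refine ⟨P ω1 + P ω2 - P ω3 - P ω4, ?_, ?_⟩
  · rw [hQ]
    have d1 : E1.totalDegree ≤ (m - 1) * (Fintype.card F - 1) + (Fintype.card F - 3) := by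
      rcases hE1d with h | h
      · omega
      · rw [h, totalDegree_zero]; omega
    have d2 : E2.totalDegree ≤ (m - 1) * (Fintype.card F - 1) + (Fintype.card F - 3) := by
      rcases hE2d with h | h
      · omega
      · rw [h, totalDegree_zero]; omega
    have d3 : E3.totalDegree ≤ (m - 1) * (Fintype.card F - 1) + (Fintype.card F - 3) := by
      rcases hE3d with h | h
      · omega
      · rw [h, totalDegree_zero]; omega
    have d4 : E4.totalDegree ≤ (m - 1) * (Fintype.card F - 1) + (Fintype.card F - 3) := by
      rcases hE4d with h | h
      · omega
      · rw [h, totalDegree_zero]; omega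
    have t1 := totalDegree_sub (E1 + E2 - E3) E4
    have t2 := totalDegree_sub (E1 + E2) E3
    have t3 := totalDegree_add E1 E2
    simp only [sup_le_iff, max_le_iff] at *
    omega
  · intro x
    simp only [map_add, map_sub, hPeval]
end
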